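/- Let A, B be symmetric positive definite q×q matrices and set J = A^{−1/2}(A^{1/2} B A^{1/2})^{1/2} A^{−1/2}. Then J is symmetric positive definite, J A J = B (i.e., J is the optimal transport map matrix), and its inverse satisfies J^{−1} = A^{1/2}(A^{1/2} B A^{1/2})^{−1/2} A^{1/2}. Moreover the Fréchet derivative of (A,B) ↦ 2 tr((A^{1/2} B A^{1/2})^{1/2}) at (A,B) in the direction (G,H) ∈ S^q × S^q equals tr(J G) + tr(J^{−1} H). -/

import Mathlib

open Matrix

/-- The positive semidefinite square root `A^{1/2}` of a matrix
(junk value `0` if `A` is not positive semidefinite). -/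
noncomputable def msqrt {n : Type*} [Fintype n] [DecidableEq n]
    (A : Matrix n n ℝ) : Matrix n n ℝ := by
  classical exact if h : A.PosSemidef then
    (h.1.eigenvectorUnitary : Matrix n n ℝ) *
      diagonal ((↑) ∘ (fun x : ℝ => Real.sqrt x) ∘ h.1.eigenvalues) *
      (star h.1.eigenvectorUnitary : Matrix n n ℝ) else 0

/-- The squared Bures-Wasserstein distance
`d_W²(R, S) = tr R + tr S − 2 tr((R^{1/2} S R^{1/2})^{1/2})`. -/
noncomputable def dWsq {n : Type*} [Fintype n] [DecidableEq n]
    (R S : Matrix n n ℝ) : ℝ :=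
  R.trace + S.trace - 2 * (msqrt (msqrt R * S * msqrt R)).trace

attribute [local instance] Matrix.normedAddCommGroup Matrix.normedSpace

/-- The optimal-transport map matrix `J = A^{−1/2}(A^{1/2} B A^{1/2})^{1/2} A^{−1/2}`. -/
noncomputable def otMap {q : ℕ} (A B : Matrix (Fin q) (Fin q) ℝ) :
    Matrix (Fin q) (Fin q) ℝ :=
  (msqrt A)⁻¹ * msqrt (msqrt A * B * msqrt A) * (msqrt A)⁻¹

/-!
For `M > 0` put `R = A^{1/2}`, `C = R M R` and `S = (R B R)^{1/2}`. Then
`0 ≤ tr((C - S) C⁻¹ (C - S)) = tr(M A) - 2 tr S + tr(M⁻¹ B)`, with equality for `C = S`, i.e.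
`M = J`. So `f(A, B) = 2 tr((A^{1/2} B A^{1/2})^{1/2})` is the minimum over `M > 0` of the linear
functionals `(A, B) ↦ tr(M A) + tr(M⁻¹ B)`, attained at `M = J(A, B)`. As `J` depends
continuously on `(A, B)`, squeezing `f` between these functionals at `J(A, B)` and at `J(A', B')`
gives the derivative (the envelope theorem). Symmetric pairs near `(A, B)` are positive definite,
so the derivative within symmetric pairs is the one within positive definite pairs.
-/

open Filter Topology
open scoped MatrixOrder

theorem hasFDerivWithinAt_of_envelope {E : Type*} [NormedAddCommGroup E] [NormedSpace ℝ E]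
    {f : E → ℝ} {ℓ : E → E →L[ℝ] ℝ} {s : Set E} {x : E} (hx : x ∈ s)
    (hle : ∀ y ∈ s, ∀ z ∈ s, f z ≤ ℓ y z) (heq : ∀ y ∈ s, f y = ℓ y y)
    (hℓ : ContinuousWithinAt ℓ s x) : HasFDerivWithinAt f (ℓ x) s x := by
  have hbound : ∀ y ∈ s, ‖f y - f x - ℓ x (y - x)‖ ≤ ‖ℓ y - ℓ x‖ * ‖y - x‖ := by
    intro y hy
    have hup : f y - f x - ℓ x (y - x) ≤ 0 := by
      have := hle x hx y hy
      rw [map_sub, ← heq x hx]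
      linarith
    have hlow : (ℓ y - ℓ x) (y - x) ≤ f y - f x - ℓ x (y - x) := by
      have := hle y hy x hx
      rw [_root_.sub_apply, map_sub, ← heq y hy]
      linarith
    have hop := (ℓ y - ℓ x).le_opNorm (y - x)
    rw [Real.norm_eq_abs] at hop ⊢
    rw [abs_of_nonpos hup]
    linarith [neg_abs_le ((ℓ y - ℓ x) (y - x))]
  have hsmall : (fun y => ‖ℓ y - ℓ x‖ * ‖y - x‖) =o[𝓝[s] x] fun y => y - x := by
    have h1 : (fun y => ‖ℓ y - ℓ x‖) =o[𝓝[s] x] fun _ => (1 : ℝ) :=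
      (Asymptotics.isLittleO_one_iff ℝ).mpr (tendsto_iff_norm_sub_tendsto_zero.mp hℓ)
    simpa only [one_mul, Asymptotics.isLittleO_norm_right] using
      h1.mul_isBigO (Asymptotics.isBigO_refl (fun y => ‖y - x‖) _)
  refine hasFDerivWithinAt_iff_isLittleO.mpr ?_
  exact (Asymptotics.IsBigO.of_bound 1 (eventually_nhdsWithin_of_forall fun y hy => by
    simpa [abs_mul] using hbound y hy)).trans_isLittleO hsmall

section TraceForm

variable {n : Type*} [Fintype n]

-- `(G, H) ↦ tr(M G) + tr(N H)`, spelled as the derivative in `otMap_spec`.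
noncomputable def traceForm (M N : Matrix n n ℝ) : Matrix n n ℝ × Matrix n n ℝ →L[ℝ] ℝ :=
  LinearMap.toContinuousLinearMap
    ((traceLinearMap n ℝ ℝ).comp ((LinearMap.mulLeft ℝ M).comp (LinearMap.fst ℝ _ _)) +
      (traceLinearMap n ℝ ℝ).comp ((LinearMap.mulLeft ℝ N).comp (LinearMap.snd ℝ _ _)))

lemma ContinuousWithinAt.traceForm {X : Type*} [TopologicalSpace X] {f g : X → Matrix n n ℝ}
    {s : Set X} {x : X} (hf : ContinuousWithinAt f s x) (hg : ContinuousWithinAt g s x) :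
    ContinuousWithinAt (fun y => traceForm (f y) (g y)) s x :=
  continuousWithinAt_clm_apply.mpr fun _ =>
    ((continuous_id.matrix_mul continuous_const).matrix_trace.continuousAt.comp_continuousWithinAt
      hf).add
    ((continuous_id.matrix_mul continuous_const).matrix_trace.continuousAt.comp_continuousWithinAt
      hg)

end TraceForm

section PositiveMatrices

variable {n : Type*} [Fintype n] [DecidableEq n] {A : Matrix n n ℝ}

lemma ContinuousWithinAt.matrix_inv {X : Type*} [TopologicalSpace X] {f : X → Matrix n n ℝ}
    {s : Set X} {x : X} (hf : ContinuousWithinAt f s x) (hx : (f x).det ≠ 0) :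
    ContinuousWithinAt (fun y => (f y)⁻¹) s x := by
  have hdet : ContinuousAt Ring.inverse (f x).det := by
    rw [Ring.inverse_eq_inv']
    exact continuousAt_inv₀ hx
  exact (continuousAt_matrix_inv _ hdet).comp_continuousWithinAt hf

lemma Matrix.PosDef.mul_mul_same {R B : Matrix n n ℝ} (hB : B.PosDef) (hR : R.PosDef) :
    (R * B * R).PosDef := by
  have := hB.conjTranspose_mul_mul_same (mulVec_injective_of_isUnit hR.isUnit)
  rwa [hR.isHermitian.eq] at this

lemma Matrix.PosDef.two_mul_trace_le_trace_add_trace_inv_mul {C S : Matrix n n ℝ}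
    (hC : C.PosDef) (hS : S.IsHermitian) :
    2 * S.trace ≤ C.trace + (C⁻¹ * (S * S)).trace := by
  have hu := C.isUnit_iff_isUnit_det.mp hC.isUnit
  have hsq : (C - S)ᴴ * C⁻¹ * (C - S) = C - 2 • S + S * C⁻¹ * S := by
    rw [(hC.isHermitian.sub hS).eq, sub_mul, sub_mul, mul_nonsing_inv _ hu, one_mul, mul_sub,
      nonsing_inv_mul_cancel_right _ _ hu]
    abel
  have := (hC.inv.posSemidef.conjTranspose_mul_mul_same (C - S)).trace_nonneg
  rw [hsq, trace_add, trace_sub, trace_smul, trace_mul_cycle, trace_mul_comm] at this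
  simp only [nsmul_eq_mul] at this
  linarith

lemma Matrix.PosDef.exists_pos_smul_one_le (hA : A.PosDef) :
    ∃ c : ℝ, 0 < c ∧ c • (1 : Matrix n n ℝ) ≤ A := by
  cases isEmpty_or_nonempty n
  · exact ⟨1, one_pos, le_of_eq (Subsingleton.elim _ _)⟩
  simp_rw [← Algebra.algebraMap_eq_smul_one]
  exact (CFC.exists_pos_algebraMap_le_iff hA.isHermitian.isSelfAdjoint).mpr
    ((StarOrderedRing.isStrictlyPositive_iff_spectrum_pos A).mp hA.isStrictlyPositive)

-- `‖X‖` is the L2 operator norm here, not the entrywise norm used elsewhere in this file.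
open scoped Matrix.Norms.L2Operator in
lemma Matrix.IsHermitian.neg_norm_smul_one_le {X : Matrix n n ℝ} (hX : X.IsHermitian) :
    -(‖X‖ • (1 : Matrix n n ℝ)) ≤ X := by
  cases isEmpty_or_nonempty n
  · exact le_of_eq (Subsingleton.elim _ _)
  rw [← Algebra.algebraMap_eq_smul_one, ← map_neg]
  refine algebraMap_le_of_le_spectrum (fun x hx => ?_) (ha := hX.isSelfAdjoint)
  exact neg_le_of_abs_le (spectrum.norm_le_norm_of_mem hx)

lemma Matrix.PosDef.eventually_posDef (hA : A.PosDef) :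
    ∀ᶠ X in 𝓝[{X | X.IsHermitian}] A, X.PosDef := by
  obtain ⟨c, hc, hcA⟩ := hA.exists_pos_smul_one_le
  open scoped Matrix.Norms.L2Operator in
  filter_upwards [nhdsWithin_le_nhds (Metric.ball_mem_nhds A hc), self_mem_nhdsWithin]
    with X hXA hX
  rw [Metric.mem_ball, dist_eq_norm] at hXA
  have hle : (c - ‖X - A‖) • (1 : Matrix n n ℝ) ≤ X := calc
    (c - ‖X - A‖) • (1 : Matrix n n ℝ) = c • 1 + -(‖X - A‖ • 1) := by
      rw [sub_smul, sub_eq_add_neg]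
    _ ≤ A + (X - A) := add_le_add hcA (hX.sub hA.isHermitian).neg_norm_smul_one_le
    _ = X := add_sub_cancel A X
  simpa using (PosDef.one.smul (sub_pos.mpr hXA)).add_posSemidef (Matrix.le_iff.mp hle)

lemma msqrt_eq_sqrt (hA : A.PosSemidef) : msqrt A = CFC.sqrt A := by
  rw [CFC.sqrt_eq_real_sqrt A hA.nonneg, cfcₙ_eq_cfc, hA.1.cfc_eq, msqrt, dif_pos hA,
    IsHermitian.cfc, Unitary.conjStarAlgAut_apply]
  rfl

lemma Matrix.PosSemidef.msqrt (hA : A.PosSemidef) : (msqrt A).PosSemidef := by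
  rw [msqrt_eq_sqrt hA]
  exact (CFC.sqrt_nonneg A).posSemidef

lemma msqrt_mul_self (hA : A.PosSemidef) : msqrt A * msqrt A = A := by
  rw [msqrt_eq_sqrt hA]
  exact CFC.sqrt_mul_sqrt_self A hA.nonneg

lemma Matrix.PosDef.msqrt (hA : A.PosDef) : (msqrt A).PosDef := by
  rw [msqrt_eq_sqrt hA.posSemidef]
  exact (CFC.sqrt_nonneg A).posSemidef.posDef_iff_isUnit.mpr
    (CFC.isUnit_sqrt_iff_isStrictlyPositive.mpr hA.isStrictlyPositive)

lemma continuousOn_msqrt : ContinuousOn msqrt {A : Matrix n n ℝ | A.PosSemidef} := by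
  refine ContinuousOn.congr ?_ fun A hA => msqrt_eq_sqrt hA
  open scoped Matrix.Norms.L2Operator in
  exact CFC.continuousOn_sqrt.mono fun A hA => hA.nonneg

lemma two_mul_trace_msqrt_le {A B M : Matrix n n ℝ} (hA : A.PosDef) (hB : B.PosSemidef)
    (hM : M.PosDef) :
    2 * (msqrt (msqrt A * B * msqrt A)).trace ≤ (M * A).trace + (M⁻¹ * B).trace := by
  have hRBR : (msqrt A * B * msqrt A).PosSemidef := by
    have := hB.conjTranspose_mul_mul_same (msqrt A)
    rwa [hA.msqrt.isHermitian.eq] at this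
  have key := (hM.mul_mul_same hA.msqrt).two_mul_trace_le_trace_add_trace_inv_mul
    hRBR.msqrt.isHermitian
  rw [msqrt_mul_self hRBR] at key
  have hR := (msqrt A).isUnit_iff_isUnit_det.mp hA.msqrt.isUnit
  have hRR := msqrt_mul_self hA.posSemidef
  generalize msqrt A = R at hR hRR key ⊢
  subst hRR
  have hC : (R * M * R).trace = (M * (R * R)).trace := by
    rw [trace_mul_cycle, trace_mul_comm]
  have hCS : ((R * M * R)⁻¹ * (R * B * R)).trace = (M⁻¹ * B).trace := by
    rw [Matrix.mul_inv_rev, Matrix.mul_inv_rev]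
    simp only [Matrix.mul_assoc, nonsing_inv_mul_cancel_left _ _ hR]
    rw [trace_mul_comm]
    simp only [Matrix.mul_assoc, mul_nonsing_inv _ hR, Matrix.mul_one]
  rwa [hC, hCS] at key

end PositiveMatrices

section OTMap

variable {q : ℕ} {A B : Matrix (Fin q) (Fin q) ℝ}

lemma otMap_posDef (hA : A.PosDef) (hB : B.PosDef) : (otMap A B).PosDef :=
  (hB.mul_mul_same hA.msqrt).msqrt.mul_mul_same hA.msqrt.inv

lemma otMap_mul_mul_self (hA : A.PosDef) (hB : B.PosDef) : otMap A B * A * otMap A B = B := by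
  have hR := (msqrt A).isUnit_iff_isUnit_det.mp hA.msqrt.isUnit
  have hS := msqrt_mul_self (hB.mul_mul_same hA.msqrt).posSemidef
  have hRR := msqrt_mul_self hA.posSemidef
  rw [otMap]
  generalize msqrt (msqrt A * B * msqrt A) = S at hS ⊢
  generalize msqrt A = R at hR hS hRR ⊢
  subst hRR
  simp only [Matrix.mul_assoc, nonsing_inv_mul_cancel_left _ _ hR,
    mul_nonsing_inv_cancel_left _ _ hR]
  rw [← Matrix.mul_assoc S, hS]
  simp only [Matrix.mul_assoc, nonsing_inv_mul_cancel_left _ _ hR, mul_nonsing_inv _ hR,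
    Matrix.mul_one]

lemma otMap_inv (hA : A.PosDef) :
    (otMap A B)⁻¹ = msqrt A * (msqrt (msqrt A * B * msqrt A))⁻¹ * msqrt A := by
  have hR := (msqrt A).isUnit_iff_isUnit_det.mp hA.msqrt.isUnit
  rw [otMap, Matrix.mul_inv_rev, Matrix.mul_inv_rev, nonsing_inv_nonsing_inv _ hR,
    ← Matrix.mul_assoc]

lemma trace_otMap_mul_add_trace_inv_mul (hA : A.PosDef) (hB : B.PosDef) :
    (otMap A B * A).trace + ((otMap A B)⁻¹ * B).trace
      = 2 * (msqrt (msqrt A * B * msqrt A)).trace := by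
  have hR := (msqrt A).isUnit_iff_isUnit_det.mp hA.msqrt.isUnit
  have hSu := (msqrt _).isUnit_iff_isUnit_det.mp (hB.mul_mul_same hA.msqrt).msqrt.isUnit
  have hS := msqrt_mul_self (hB.mul_mul_same hA.msqrt).posSemidef
  have hRR := msqrt_mul_self hA.posSemidef
  rw [otMap_inv hA, otMap]
  generalize msqrt (msqrt A * B * msqrt A) = S at hS hSu ⊢
  generalize msqrt A = R at hR hS hRR ⊢
  subst hRR
  have hSR : (R * (S⁻¹ * (R * B))).trace = S.trace := by
    rw [trace_mul_comm, Matrix.mul_assoc, ← hS, nonsing_inv_mul_cancel_left _ _ hSu]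
  simp only [Matrix.mul_assoc, nonsing_inv_mul_cancel_left _ _ hR]
  rw [trace_mul_comm, Matrix.mul_assoc, mul_nonsing_inv _ hR, Matrix.mul_one, hSR]
  ring

lemma continuousOn_otMap :
    ContinuousOn (fun p : Matrix (Fin q) (Fin q) ℝ × Matrix (Fin q) (Fin q) ℝ => otMap p.1 p.2)
      {p | p.1.PosDef ∧ p.2.PosDef} := by
  have hR : ContinuousOn (fun p : Matrix (Fin q) (Fin q) ℝ × Matrix (Fin q) (Fin q) ℝ =>
      msqrt p.1) {p | p.1.PosDef ∧ p.2.PosDef} :=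
    continuousOn_msqrt.comp continuousOn_fst fun p hp => hp.1.posSemidef
  have hRinv : ContinuousOn (fun p : Matrix (Fin q) (Fin q) ℝ × Matrix (Fin q) (Fin q) ℝ =>
      (msqrt p.1)⁻¹) {p | p.1.PosDef ∧ p.2.PosDef} := fun p hp =>
    (hR p hp).matrix_inv hp.1.msqrt.det_pos.ne'
  have hS : ContinuousOn (fun p : Matrix (Fin q) (Fin q) ℝ × Matrix (Fin q) (Fin q) ℝ =>
      msqrt (msqrt p.1 * p.2 * msqrt p.1)) {p | p.1.PosDef ∧ p.2.PosDef} :=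
    continuousOn_msqrt.comp ((hR.mul continuousOn_snd).mul hR) fun p hp =>
      (hp.2.mul_mul_same hp.1.msqrt).posSemidef
  exact (hRinv.mul hS).mul hRinv

lemma hasFDerivWithinAt_two_mul_trace_msqrt (hA : A.PosDef) (hB : B.PosDef) :
    HasFDerivWithinAt
      (fun p : Matrix (Fin q) (Fin q) ℝ × Matrix (Fin q) (Fin q) ℝ =>
        2 * (msqrt (msqrt p.1 * p.2 * msqrt p.1)).trace)
      (traceForm (otMap A B) (otMap A B)⁻¹) {p | p.1.PosDef ∧ p.2.PosDef} (A, B) := by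
  have hJ := continuousOn_otMap (A, B) ⟨hA, hB⟩
  refine hasFDerivWithinAt_of_envelope (by exact ⟨hA, hB⟩) ?_ ?_
    (hJ.traceForm (hJ.matrix_inv (otMap_posDef hA hB).det_pos.ne'))
  · rintro y ⟨hy1, hy2⟩ z ⟨hz1, hz2⟩
    exact two_mul_trace_msqrt_le hz1 hz2.posSemidef (otMap_posDef hy1 hy2)
  · rintro y ⟨hy1, hy2⟩
    exact (trace_otMap_mul_add_trace_inv_mul hy1 hy2).symm

end OTMap

/-- For positive definite `A, B` and `J = A^{−1/2}(A^{1/2} B A^{1/2})^{1/2} A^{−1/2}` :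
`J` is (symmetric) positive definite, `J A J = B`,
`J⁻¹ = A^{1/2}(A^{1/2} B A^{1/2})^{−1/2} A^{1/2}`, and the Fréchet derivative of
`(A,B) ↦ 2 tr((A^{1/2} B A^{1/2})^{1/2})` (on pairs of symmetric matrices) at `(A,B)` in
direction `(G,H)` is `tr(J G) + tr(J⁻¹ H)`. -/
theorem otMap_spec {q : ℕ} (A B : Matrix (Fin q) (Fin q) ℝ)
    (hA : A.PosDef) (hB : B.PosDef) :
    (otMap A B).PosDef ∧
      otMap A B * A * otMap A B = B ∧
      (otMap A B)⁻¹ = msqrt A * (msqrt (msqrt A * B * msqrt A))⁻¹ * msqrt A ∧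
      HasFDerivWithinAt
        (fun p : Matrix (Fin q) (Fin q) ℝ × Matrix (Fin q) (Fin q) ℝ =>
          2 * (msqrt (msqrt p.1 * p.2 * msqrt p.1)).trace)
        (LinearMap.toContinuousLinearMap
          (((Matrix.traceLinearMap (Fin q) ℝ ℝ).comp
              ((LinearMap.mulLeft ℝ (otMap A B)).comp
                (LinearMap.fst ℝ (Matrix (Fin q) (Fin q) ℝ) (Matrix (Fin q) (Fin q) ℝ)))) +
            ((Matrix.traceLinearMap (Fin q) ℝ ℝ).comp
              ((LinearMap.mulLeft ℝ (otMap A B)⁻¹).comp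
                (LinearMap.snd ℝ (Matrix (Fin q) (Fin q) ℝ) (Matrix (Fin q) (Fin q) ℝ))))))
        {p : Matrix (Fin q) (Fin q) ℝ × Matrix (Fin q) (Fin q) ℝ |
          p.1.IsHermitian ∧ p.2.IsHermitian} (A, B) := by
  refine ⟨otMap_posDef hA hB, otMap_mul_mul_self hA hB, otMap_inv hA, ?_⟩
  have hU := prod_mem_prod hA.eventually_posDef hB.eventually_posDef
  rw [← nhdsWithin_prod_eq] at hU
  exact (hasFDerivWithinAt_two_mul_trace_msqrt hA hB).mono_of_mem_nhdsWithin hU
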